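/- Let ℵ be an infinite cardinal and let ℵ' < ℵ be a (possibly finite) cardinal. Let G be a decomposition of the complete graph K_ℵ into graphs each of order at most ℵ', and assume that the set of graphs of G that are not complete graphs has cardinality at most ℵ'. Then G is resolvable, i.e., G can be partitioned into resolution classes. -/

import Mathlib

universe u

/-- A set `𝒢` of subgraphs of `Λ` is a decomposition of `Λ`: the edge sets of the
members of `𝒢` partition the edge set of `Λ`. -/
def IsDecompositionSet {V : Type*} (Λ : SimpleGraph V) (𝒢 : Set Λ.Subgraph) : Prop :=
  ∀ e ∈ Λ.edgeSet, ∃! Γ, Γ ∈ 𝒢 ∧ e ∈ Γ.edgeSet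

/-- A resolution class: a set of pairwise vertex-disjoint subgraphs whose vertex
sets together cover all the vertices. -/
def IsResolutionClass {V : Type*} {Λ : SimpleGraph V} (C : Set Λ.Subgraph) : Prop :=
  (C.Pairwise fun Γ₁ Γ₂ => Disjoint Γ₁.verts Γ₂.verts) ∧ ∀ x : V, ∃ Γ ∈ C, x ∈ Γ.verts

/-- A decomposition `𝒢` is resolvable if it can be partitioned into resolution
classes. -/
def IsResolvable {V : Type*} {Λ : SimpleGraph V} (𝒢 : Set Λ.Subgraph) : Prop :=
  ∃ P : Set (Set Λ.Subgraph), ⋃₀ P = 𝒢 ∧ P.PairwiseDisjoint id ∧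
    ∀ C ∈ P, IsResolutionClass C

/-- A subgraph is a complete graph if any two distinct vertices of it are adjacent
in it. -/
def SubgraphIsComplete {V : Type*} {Λ : SimpleGraph V} (Γ : Λ.Subgraph) : Prop :=
  ∀ a ∈ Γ.verts, ∀ b ∈ Γ.verts, a ≠ b → Γ.Adj a b

/-!
Enumerate, along the initial well-order of cardinality `ℵ` (whose proper initial segments have
fewer than `ℵ` elements), the tasks "give `Γ ∈ 𝒢` a colour" and "cover the vertex `x` by colour
`i`", with `ℵ` colours in all, and fulfil them greedily; fewer than `ℵ` graphs are coloured
before any step. A graph without a colour gets an unused one. To cover `x` by colour `i`, whose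
graphs so far cover a set `S` of fewer than `ℵ` vertices, take `y` outside `S` and outside the
graphs that are already coloured, not complete, or complete through `x` and meeting `S` (at most
one per vertex of `S`, as two vertices lie in exactly one common graph). The graph through the
edge `xy` is then uncoloured and complete; if it met `S` it would be one of the excluded graphs,
so it is disjoint from `S` and can be given colour `i`.
-/

open Cardinal Set Function

theorem Cardinal.mk_biUnion_lt {ι α : Type u} {s : Set ι} {f : ι → Set α} {c κ : Cardinal}
    (hκ : ℵ₀ ≤ κ) (hs : #s < κ) (hc : c < κ) (hf : ∀ i ∈ s, #(f i) ≤ c) :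
    #(⋃ i ∈ s, f i) < κ :=
  (mk_biUnion_le f s).trans_lt <|
    mul_lt_of_lt hκ hs ((ciSup_le' fun i : s => hf i.1 i.2).trans_lt hc)

theorem exists_forall_of_history {T γ : Type*} [LinearOrder T] [WellFoundedLT T]
    (Q : T → Set γ → Option γ → Prop)
    (h : ∀ t (f : T → Option γ), ∃ o, Q t {p | ∃ s < t, p ∈ f s} o) :
    ∃ F : T → Option γ, ∀ t, Q t {p | ∃ s < t, p ∈ F s} (F t) := by
  choose step hstep using h
  let F := wellFounded_lt.fix fun t prior => step t fun s => if hs : s < t then prior s hs else none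
  refine ⟨F, fun t => ?_⟩
  have hF : F t = step t fun s => if s < t then F s else none := by
    simp only [F]
    exact wellFounded_lt.fix_eq _ t
  have hhist : {p | ∃ s < t, p ∈ F s} = {p | ∃ s < t, p ∈ if s < t then F s else none} := by
    ext p
    exact exists_congr fun s => and_congr_right fun hs => by rw [if_pos hs]
  rw [hF, hhist]
  exact hstep t _

theorem Cardinal.mk_setOf_exists_lt_mem_le {T γ : Type u} [LinearOrder T] (f : T → Option γ)
    (t : T) : #{p | ∃ s < t, p ∈ f s} ≤ #(Iio t) :=
  calc #{p | ∃ s < t, p ∈ f s} ≤ #(some ⁻¹' (f '' Iio t)) :=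
        mk_le_mk_of_subset fun _ ⟨s, hst, hs⟩ => ⟨s, hst, hs⟩
    _ ≤ #(Iio t) := (mk_preimage_of_injective _ _ (Option.some_injective γ)).trans mk_image_le

section Colouring

variable {V ι : Type*} {Λ : SimpleGraph V} {𝒢 : Set Λ.Subgraph}

-- A (partial) colouring of `𝒢` by `ι` is a set of pairs `(Γ, i)`, read "`Γ` has colour `i`".
def colourClass (A : Set (𝒢 × ι)) (i : ι) : Set Λ.Subgraph :=
  Subtype.val '' {Γ | (Γ, i) ∈ A}

theorem isResolvable_of_colouring (A : Set (𝒢 × ι)) (hex : ∀ Γ, ∃ i, (Γ, i) ∈ A)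
    (huniq : ∀ Γ i j, (Γ, i) ∈ A → (Γ, j) ∈ A → i = j)
    (hclass : ∀ i, IsResolutionClass (colourClass A i)) : IsResolvable 𝒢 := by
  refine ⟨range (colourClass A), ?_, ?_, forall_mem_range.2 hclass⟩
  · ext Γ
    constructor
    · rintro ⟨_, ⟨i, rfl⟩, Γ', -, rfl⟩
      exact Γ'.2
    · intro hΓ
      obtain ⟨i, hi⟩ := hex ⟨Γ, hΓ⟩
      exact ⟨_, ⟨i, rfl⟩, ⟨Γ, hΓ⟩, hi, rfl⟩
  · rintro _ ⟨i, rfl⟩ _ ⟨j, rfl⟩ hne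
    refine Set.disjoint_left.2 ?_
    rintro _ ⟨Γ, hi, rfl⟩ ⟨Γ', hj, hΓ⟩
    rw [Subtype.ext hΓ] at hj
    exact hne (congrArg _ (huniq Γ i j hi hj))

def IsAdmissible (H : Set (𝒢 × ι)) (Γ : 𝒢) (i : ι) : Prop :=
  (∀ j, (Γ, j) ∉ H) ∧ ∀ Γ', (Γ', i) ∈ H → Disjoint Γ.1.verts Γ'.1.verts

def IsTaskMet (A : Set (𝒢 × ι)) : 𝒢 ⊕ ι × V → Prop
  | .inl Γ => ∃ i, (Γ, i) ∈ A
  | .inr (i, x) => ∃ Γ, (Γ, i) ∈ A ∧ x ∈ Γ.1.verts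

theorem IsTaskMet.mono {A B : Set (𝒢 × ι)} (hAB : A ⊆ B) :
    ∀ {τ : 𝒢 ⊕ ι × V}, IsTaskMet A τ → IsTaskMet B τ
  | .inl _, ⟨i, hi⟩ => ⟨i, hAB hi⟩
  | .inr _, ⟨Γ, hΓ, hx⟩ => ⟨Γ, hAB hΓ, hx⟩

theorem isResolvable_of_greedy {T : Type*} [LinearOrder T] (F : T → Option (𝒢 × ι))
    (hadm : ∀ t, ∀ p ∈ F t, IsAdmissible {q | ∃ s < t, q ∈ F s} p.1 p.2)
    (hmet : ∀ τ, IsTaskMet {q | ∃ t, q ∈ F t} τ) : IsResolvable 𝒢 := by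
  have hlt {s t Γ Γ' i j} (hst : s < t) (hs : (Γ, i) ∈ F s) (ht : (Γ', j) ∈ F t) :
      Γ' ≠ Γ ∧ (i = j → Disjoint Γ'.1.verts Γ.1.verts) := by
    obtain ⟨hfresh, hdisj⟩ := hadm t _ ht
    exact ⟨by rintro rfl; exact hfresh i ⟨s, hst, hs⟩,
      by rintro rfl; exact hdisj Γ ⟨s, hst, hs⟩⟩
  refine isResolvable_of_colouring _ (fun Γ => hmet (.inl Γ)) ?_ fun i => ⟨?_, fun x => ?_⟩
  · rintro Γ i j ⟨s, hs⟩ ⟨t, ht⟩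
    rcases lt_trichotomy s t with hst | rfl | hts
    · exact ((hlt hst hs ht).1 rfl).elim
    · exact congrArg Prod.snd (Option.mem_unique hs ht)
    · exact ((hlt hts ht hs).1 rfl).elim
  · rintro _ ⟨Γ, ⟨s, hs⟩, rfl⟩ _ ⟨Γ', ⟨t, ht⟩, rfl⟩ hne
    rcases lt_trichotomy s t with hst | rfl | hts
    · exact ((hlt hst hs ht).2 rfl).symm
    · exact (hne (congrArg (·.1.1) (Option.mem_unique hs ht))).elim
    · exact (hlt hts ht hs).2 rfl
  · obtain ⟨Γ, hΓ, hx⟩ := hmet (.inr (i, x))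
    exact ⟨Γ, ⟨Γ, hΓ, rfl⟩, hx⟩

end Colouring

theorem IsDecompositionSet.existsUnique_adj {V : Type*} {Λ : SimpleGraph V}
    {𝒢 : Set Λ.Subgraph} (hdec : IsDecompositionSet Λ 𝒢) {x y : V} (h : Λ.Adj x y) :
    ∃! Γ, Γ ∈ 𝒢 ∧ Γ.Adj x y := by
  simpa using hdec s(x, y) h

namespace IsDecompositionSet

variable {X : Type u} {𝒢 : Set (⊤ : SimpleGraph X).Subgraph}

theorem existsUnique_adj_of_ne (hdec : IsDecompositionSet ⊤ 𝒢) {x y : X} (h : x ≠ y) :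
    ∃! Γ, Γ ∈ 𝒢 ∧ Γ.Adj x y :=
  hdec.existsUnique_adj ((SimpleGraph.top_adj x y).2 h)

theorem mk_le (hdec : IsDecompositionSet ⊤ 𝒢) {ℵ ℵ' : Cardinal.{u}} (hℵ : ℵ₀ ≤ ℵ)
    (hX : #X = ℵ) (hℵ' : ℵ' ≤ ℵ) (hcomp : #{Γ ∈ 𝒢 | ¬ SubgraphIsComplete Γ} ≤ ℵ') :
    #𝒢 ≤ ℵ := by
  have hsplit : 𝒢 ⊆ {Γ ∈ 𝒢 | ¬ SubgraphIsComplete Γ} ∪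
      {Γ ∈ 𝒢 | ∃ p : X × X, Γ.Adj p.1 p.2} ∪
      {Γ | Γ.verts.Subsingleton ∧ ∀ a b, ¬ Γ.Adj a b} := by
    intro Γ hΓ
    by_cases hc : SubgraphIsComplete Γ
    · by_cases hadj : ∃ p : X × X, Γ.Adj p.1 p.2
      · exact Or.inl (Or.inr ⟨hΓ, hadj⟩)
      · refine Or.inr ⟨fun a ha b hb => by_contra fun hab => hadj ⟨(a, b), hc a ha b hb hab⟩,
          fun a b h => hadj ⟨(a, b), h⟩⟩
    · exact Or.inl (Or.inl ⟨hΓ, hc⟩)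
  have hedge : #{Γ ∈ 𝒢 | ∃ p : X × X, Γ.Adj p.1 p.2} ≤ ℵ := by
    choose p hp using fun Γ : {Γ ∈ 𝒢 | ∃ p : X × X, Γ.Adj p.1 p.2} => Γ.2.2
    have hinj : Injective p := fun Γ Γ' he =>
      have hne := (Γ.1.adj_sub (hp Γ)).ne
      Subtype.ext <| (hdec.existsUnique_adj_of_ne hne).unique ⟨Γ.2.1, hp Γ⟩
        ⟨Γ'.2.1, he ▸ hp Γ'⟩
    calc _ ≤ #(X × X) := mk_le_of_injective hinj
      _ = ℵ := by rw [mk_prod, lift_id, hX, mul_eq_self hℵ]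
  have hedgeless : #{Γ : (⊤ : SimpleGraph X).Subgraph |
      Γ.verts.Subsingleton ∧ ∀ a b, ¬ Γ.Adj a b} ≤ ℵ := by
    let v (Γ : {Γ : (⊤ : SimpleGraph X).Subgraph | Γ.verts.Subsingleton ∧ ∀ a b, ¬ Γ.Adj a b}) :
        {t : Set X // #t ≤ 1} := ⟨Γ.1.verts, mk_le_one_iff_set_subsingleton.2 Γ.2.1⟩
    have hinj : Injective v := fun Γ Γ' he =>
      Subtype.ext <| SimpleGraph.Subgraph.ext (congrArg Subtype.val he) <|
        funext₂ fun a b => propext (iff_of_false (Γ.2.2 a b) (Γ'.2.2 a b))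
    calc _ ≤ #{t : Set X // #t ≤ 1} := mk_le_of_injective hinj
      _ ≤ max #X ℵ₀ ^ (1 : Cardinal) := mk_bounded_set_le X 1
      _ = ℵ := by rw [power_one, hX, max_eq_left hℵ]
  calc #𝒢 ≤ _ := mk_le_mk_of_subset hsplit
    _ ≤ _ := mk_union_le _ _
    _ ≤ _ := add_le_add (mk_union_le _ _) hedgeless
    _ ≤ ℵ := add_le_of_le hℵ (add_le_of_le hℵ (hcomp.trans hℵ') hedge) le_rfl

theorem mk_complete_meeting_le (hdec : IsDecompositionSet ⊤ 𝒢) {x : X} {S : Set X}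
    (hx : x ∉ S) :
    #{Γ : 𝒢 | SubgraphIsComplete Γ.1 ∧ x ∈ Γ.1.verts ∧ (Γ.1.verts ∩ S).Nonempty} ≤ #S := by
  choose s hs using fun Γ : {Γ : 𝒢 | SubgraphIsComplete Γ.1 ∧ x ∈ Γ.1.verts ∧
    (Γ.1.verts ∩ S).Nonempty} => Γ.2.2.2
  refine mk_le_of_injective (f := fun Γ => (⟨s Γ, (hs Γ).2⟩ : S)) fun Γ Γ' he => ?_
  have he : s Γ = s Γ' := congrArg Subtype.val he
  have hxs : x ≠ s Γ := fun h => hx (h ▸ (hs Γ).2)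
  have hΓ : Γ.1.1.Adj x (s Γ) := Γ.2.1 x Γ.2.2.1 _ (hs Γ).1 hxs
  have hΓ' : Γ'.1.1.Adj x (s Γ') := Γ'.2.1 x Γ'.2.2.1 _ (hs Γ').1 (he ▸ hxs)
  exact Subtype.ext <| Subtype.ext <|
    (hdec.existsUnique_adj_of_ne hxs).unique ⟨Γ.1.2, hΓ⟩ ⟨Γ'.1.2, he ▸ hΓ'⟩

theorem exists_mem_verts_disjoint (hdec : IsDecompositionSet ⊤ 𝒢) {ℵ ℵ' : Cardinal.{u}}
    (hℵ : ℵ₀ ≤ ℵ) (hX : #X = ℵ) (hℵ' : ℵ' < ℵ) (hsmall : ∀ Γ ∈ 𝒢, #Γ.verts ≤ ℵ')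
    (hcomp : #{Γ ∈ 𝒢 | ¬ SubgraphIsComplete Γ} ≤ ℵ') {U : Set 𝒢} (hU : #U < ℵ)
    {S : Set X} (hS : #S < ℵ) {x : X} (hx : x ∉ S) :
    ∃ Γ ∉ U, x ∈ Γ.1.verts ∧ Disjoint Γ.1.verts S := by
  let W : Set 𝒢 := U ∪ {Γ | ¬ SubgraphIsComplete Γ.1} ∪
    {Γ | SubgraphIsComplete Γ.1 ∧ x ∈ Γ.1.verts ∧ (Γ.1.verts ∩ S).Nonempty}
  have hW : #W < ℵ := by
    have hnc : #{Γ : 𝒢 | ¬ SubgraphIsComplete Γ.1} < ℵ :=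
      calc _ ≤ #(Subtype.val ⁻¹' {Γ ∈ 𝒢 | ¬ SubgraphIsComplete Γ}) :=
            mk_le_mk_of_subset fun Γ hΓ => ⟨Γ.2, hΓ⟩
        _ ≤ ℵ' := (mk_preimage_of_injective _ _ Subtype.val_injective).trans hcomp
        _ < ℵ := hℵ'
    refine (mk_union_le _ _).trans_lt
      (add_lt_of_lt hℵ ?_ ((hdec.mk_complete_meeting_le hx).trans_lt hS))
    exact (mk_union_le _ _).trans_lt (add_lt_of_lt hℵ hU hnc)
  have hB : #(insert x (S ∪ ⋃ Γ ∈ W, Γ.1.verts) : Set X) < #X := by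
    rw [hX]
    refine mk_insert_le.trans_lt (add_lt_of_lt hℵ ?_ (one_lt_aleph0.trans_le hℵ))
    exact (mk_union_le _ _).trans_lt
      (add_lt_of_lt hℵ hS (mk_biUnion_lt hℵ hW hℵ' fun Γ _ => hsmall Γ.1 Γ.2))
  obtain ⟨y, hy⟩ := compl_nonempty_of_mk_lt_mk hB
  simp only [mem_compl_iff, mem_insert_iff, mem_union, mem_iUnion, not_or, not_exists] at hy
  obtain ⟨hyx, hyS, hyW⟩ := hy
  obtain ⟨Γ, ⟨hΓ𝒢, hΓ⟩, -⟩ := hdec.existsUnique_adj_of_ne (Ne.symm hyx)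
  have hΓW : ⟨Γ, hΓ𝒢⟩ ∉ W := fun h => hyW ⟨Γ, hΓ𝒢⟩ h hΓ.snd_mem
  simp only [W, mem_union, mem_ofPred_eq, not_or, not_and, not_not] at hΓW
  obtain ⟨⟨hΓU, hc⟩, hmeet⟩ := hΓW
  refine ⟨⟨Γ, hΓ𝒢⟩, hΓU, hΓ.fst_mem, ?_⟩
  rw [Set.disjoint_iff_inter_eq_empty, ← not_nonempty_iff_eq_empty]
  exact hmeet hc hΓ.fst_mem

theorem exists_admissible_isTaskMet (hdec : IsDecompositionSet ⊤ 𝒢) {ℵ ℵ' : Cardinal.{u}}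
    (hℵ : ℵ₀ ≤ ℵ) (hX : #X = ℵ) (hℵ' : ℵ' < ℵ) (hsmall : ∀ Γ ∈ 𝒢, #Γ.verts ≤ ℵ')
    (hcomp : #{Γ ∈ 𝒢 | ¬ SubgraphIsComplete Γ} ≤ ℵ') {H : Set (𝒢 × X)} (hH : #H < ℵ) :
    ∀ τ : 𝒢 ⊕ X × X, ∃ o : Option (𝒢 × X),
      (∀ p ∈ o, IsAdmissible H p.1 p.2) ∧ IsTaskMet (H ∪ {p | p ∈ o}) τ
  | .inl Γ => by
    by_cases hΓ : ∃ i, (Γ, i) ∈ H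
    · exact ⟨none, by simp, hΓ.imp fun _ => Or.inl⟩
    · obtain ⟨i, hi⟩ :=
        compl_nonempty_of_mk_lt_mk (S := Prod.snd '' H) (hX ▸ mk_image_le.trans_lt hH)
      refine ⟨some (Γ, i), ?_, i, Or.inr rfl⟩
      rintro _ ⟨⟩
      exact ⟨fun j hj => hΓ ⟨j, hj⟩, fun Γ' hΓ' => (hi ⟨_, hΓ', rfl⟩).elim⟩
  | .inr (i, x) => by
    let S := ⋃ Γ ∈ {Γ | (Γ, i) ∈ H}, Γ.1.verts
    by_cases hx : x ∈ S
    · obtain ⟨Γ, hΓ, hxΓ⟩ : ∃ Γ, (Γ, i) ∈ H ∧ x ∈ Γ.1.verts := by simpa [S] using hx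
      exact ⟨none, by simp, Γ, Or.inl hΓ, hxΓ⟩
    · have hS : #S < ℵ := by
        refine mk_biUnion_lt hℵ ?_ hℵ' fun Γ _ => hsmall Γ.1 Γ.2
        exact (mk_preimage_of_injective _ H (Prod.mk_left_injective i)).trans_lt hH
      obtain ⟨Γ, hΓU, hxΓ, hdisj⟩ :=
        hdec.exists_mem_verts_disjoint hℵ hX hℵ' hsmall hcomp (U := Prod.fst '' H)
          (mk_image_le.trans_lt hH) hS hx
      refine ⟨some (Γ, i), ?_, Γ, Or.inr rfl, hxΓ⟩
      rintro _ ⟨⟩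
      exact ⟨fun j hj => hΓU ⟨_, hj, rfl⟩, fun Γ' hΓ' => hdisj.mono_right
        (subset_biUnion_of_mem (u := fun Γ : 𝒢 => Γ.1.verts) hΓ')⟩

end IsDecompositionSet

/-- let `ℵ` be infinite and `ℵ' < ℵ` a (possibly finite) cardinal.
If `𝒢` is a decomposition of the complete graph `K_ℵ` into graphs of order at most
`ℵ'` and the set of members of `𝒢` that are not complete graphs has cardinality at
most `ℵ'`, then `𝒢` is resolvable. -/
theorem stmt_19 {X : Type u} (ℵ : Cardinal.{u}) (hℵ : Cardinal.aleph0 ≤ ℵ)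
    (hX : Cardinal.mk X = ℵ)
    (ℵ' : Cardinal.{u}) (hℵ' : ℵ' < ℵ)
    (𝒢 : Set (⊤ : SimpleGraph X).Subgraph)
    (hdec : IsDecompositionSet (⊤ : SimpleGraph X) 𝒢)
    (hsmall : ∀ Γ ∈ 𝒢, Cardinal.mk ↥Γ.verts ≤ ℵ')
    (hcomp : Cardinal.mk ↥{Γ ∈ 𝒢 | ¬ SubgraphIsComplete Γ} ≤ ℵ') :
    IsResolvable 𝒢 := by
  have : Infinite X := infinite_iff.2 (hX ▸ hℵ)
  let T := ℵ.ord.ToType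
  have hIio (t : T) : #(Iio t) < ℵ := by
    simpa only [T, mk_ord_toType] using mk_Iio_lt t (by rw [mk_ord_toType, Ordinal.type_toType])
  obtain ⟨task, htask⟩ : ∃ task : T → 𝒢 ⊕ X × X, Surjective task := by
    have hle : #(𝒢 ⊕ X × X) ≤ #T := by
      rw [mk_sum, mk_prod, lift_id, lift_id, lift_id, hX, mul_eq_self hℵ, mk_ord_toType]
      exact add_le_of_le hℵ (hdec.mk_le hℵ hX hℵ'.le hcomp) le_rfl
    obtain ⟨e⟩ := hle
    exact ⟨invFun e, invFun_surjective e.injective⟩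
  obtain ⟨F, hF⟩ := exists_forall_of_history
    (fun t H o => (∀ p ∈ o, IsAdmissible H p.1 p.2) ∧ IsTaskMet (H ∪ {p | p ∈ o}) (task t))
    fun t f => hdec.exists_admissible_isTaskMet hℵ hX hℵ' hsmall hcomp
      ((mk_setOf_exists_lt_mem_le f t).trans_lt (hIio t)) _
  refine isResolvable_of_greedy F (fun t => (hF t).1) fun τ => ?_
  obtain ⟨t, rfl⟩ := htask τ
  refine (hF t).2.mono ?_
  rintro p (⟨s, -, hs⟩ | hp)
  exacts [⟨s, hs⟩, ⟨t, hp⟩]
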